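/- Let G be a connected graph of order n ≥ 2 and v a vertex of G. Then D(G) − 1 ≤ D(G ∘ v), where G ∘ v is the vertex contraction of v: delete v and add all edges between every pair of neighbors of v (so that the neighborhood of v becomes a clique). -/

import Mathlib

open SimpleGraph

/-- Distinguishing number: least `d` admitting a vertex labeling with `d` labels
preserved only by the identity automorphism. -/
noncomputable def distNum {V : Type*} (G : SimpleGraph V) : ℕ :=
  sInf {d : ℕ | ∃ f : V → Fin d,
    ∀ φ : G ≃g G, (∀ x : V, f (φ x) = f x) → ∀ x : V, φ x = x}

/-- Distinguishing index: least `d` admitting an edge coloring with `d` colors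
preserved only by the identity automorphism. -/
noncomputable def distIdx {V : Type*} (G : SimpleGraph V) : ℕ :=
  sInf {d : ℕ | ∃ f : Sym2 V → Fin d,
    ∀ φ : G ≃g G, (∀ e ∈ G.edgeSet, f (Sym2.map φ e) = f e) → ∀ x : V, φ x = x}

/-- `G ⊙ v`: remove all edges joining two neighbors of `v`. -/
def SimpleGraph.odot {V : Type*} (G : SimpleGraph V) (v : V) : SimpleGraph V :=
  G.deleteEdges {e | ∀ x ∈ e, G.Adj v x}

/-- Vertex contraction `G ∘ v`: delete `v` and put a clique on its neighborhood. -/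
def SimpleGraph.vContract {V : Type*} (G : SimpleGraph V) (v : V) :
    SimpleGraph {u : V // u ≠ v} where
  Adj x y := x ≠ y ∧ (G.Adj x.1 y.1 ∨ (G.Adj v x.1 ∧ G.Adj v y.1))
  symm := by
    constructor
    rintro x y ⟨h1, h2 | ⟨h3, h4⟩⟩
    exacts [⟨h1.symm, Or.inl h2.symm⟩, ⟨h1.symm, Or.inr ⟨h4, h3⟩⟩]
  loopless := ⟨fun x h => h.1 rfl⟩

/-- Edge contraction `G ∘ e` for `e = uv`: merge `v` into `u`. -/
def SimpleGraph.eContract {V : Type*} (G : SimpleGraph V) (u v : V) :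
    SimpleGraph {x : V // x ≠ v} where
  Adj x y := x ≠ y ∧ (G.Adj x.1 y.1 ∨ (x.1 = u ∧ G.Adj v y.1) ∨ (y.1 = u ∧ G.Adj v x.1))
  symm := by
    constructor
    rintro x y ⟨h1, h2⟩
    refine ⟨h1.symm, ?_⟩
    rcases h2 with h | ⟨ha, hb⟩ | ⟨ha, hb⟩
    · exact Or.inl h.symm
    · exact Or.inr (Or.inr ⟨ha, hb⟩)
    · exact Or.inr (Or.inl ⟨ha, hb⟩)
  loopless := ⟨fun x h => h.1 rfl⟩

/-- The star `K_{1,n}`. -/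
def starG (n : ℕ) : SimpleGraph (Fin 1 ⊕ Fin n) := completeBipartiteGraph (Fin 1) (Fin n)

/-- The friendship graph `F_n = K_1 + n K_2`; `none` is the central vertex. -/
def friendshipGraph (n : ℕ) : SimpleGraph (Option (Fin n × Fin 2)) where
  Adj x y := x ≠ y ∧ (x = none ∨ y = none ∨ ∃ i a b, x = some (i, a) ∧ y = some (i, b))
  symm := by
    constructor
    rintro x y ⟨h1, h2⟩
    refine ⟨h1.symm, ?_⟩
    rcases h2 with h | h | ⟨i, a, b, hx, hy⟩
    · exact Or.inr (Or.inl h)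
    · exact Or.inl h
    · exact Or.inr (Or.inr ⟨i, b, a, hy, hx⟩)
  loopless := ⟨fun x h => h.1 rfl⟩

/-- `K_1 + (K_2 ∪ (n-2) K_1)` on `Fin (n+1)`: vertex `0` is the join apex,
vertices `1, 2` form the `K_2`, the rest are the isolated vertices. -/
def joinGraph (n : ℕ) : SimpleGraph (Fin (n + 1)) where
  Adj x y := x ≠ y ∧ (x = 0 ∨ y = 0 ∨ ((x = 1 ∨ x = 2) ∧ (y = 1 ∨ y = 2)))
  symm := by constructor; rintro x y ⟨h1, h2⟩; exact ⟨h1.symm, by tauto⟩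
  loopless := ⟨fun x h => h.1 rfl⟩

/-! A labeling distinguishing `G ∘ v`, extended by a fresh label at `v`, distinguishes `G`: an
automorphism preserving it fixes `v`, hence restricts to an automorphism of `G ∘ v` preserving the
original labeling, which is then the identity. -/

namespace SimpleGraph

variable {V W : Type*}

def IsDistinguishingLabeling {α : Type*} (G : SimpleGraph V) (f : V → α) : Prop :=
  ∀ φ : G ≃g G, (∀ x, f (φ x) = f x) → ∀ x, φ x = x

theorem isDistinguishingLabeling_of_injective {α : Type*} (G : SimpleGraph V) {f : V → α}
    (hf : Function.Injective f) : G.IsDistinguishingLabeling f :=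
  fun _ h x => hf (h x)

theorem distNum_le {G : SimpleGraph V} {d : ℕ} {f : V → Fin d}
    (hf : G.IsDistinguishingLabeling f) : distNum G ≤ d :=
  Nat.sInf_le ⟨f, hf⟩

theorem exists_isDistinguishingLabeling_distNum [Finite V] (G : SimpleGraph V) :
    ∃ f : V → Fin (distNum G), G.IsDistinguishingLabeling f :=
  Nat.sInf_mem (s := {d | ∃ f : V → Fin d, G.IsDistinguishingLabeling f})
    ⟨Nat.card V, Finite.equivFin V,
      G.isDistinguishingLabeling_of_injective (Finite.equivFin V).injective⟩

variable {G : SimpleGraph V} {G' : SimpleGraph W}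

def Iso.vContract (φ : G ≃g G') {v : V} {v' : W} (hv : φ v = v') :
    G.vContract v ≃g G'.vContract v' where
  toEquiv := φ.toEquiv.subtypeEquiv fun a => by
    rw [← hv]
    exact φ.injective.ne_iff.symm
  map_rel_iff' {x y} := by
    subst hv
    simp [SimpleGraph.vContract, Subtype.ext_iff, φ.map_adj_iff]

end SimpleGraph

def labelFreshAt {V : Type*} [DecidableEq V] (v : V) {d : ℕ} (f : {u : V // u ≠ v} → Fin d) :
    V → Fin (d + 1) :=
  fun x => if h : x = v then Fin.last d else (f ⟨x, h⟩).castSucc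

section labelFreshAt

variable {V : Type*} [DecidableEq V] {v : V} {d : ℕ} {f : {u : V // u ≠ v} → Fin d}

theorem labelFreshAt_of_ne {x : V} (hx : x ≠ v) : labelFreshAt v f x = (f ⟨x, hx⟩).castSucc :=
  dif_neg hx

theorem labelFreshAt_eq_last_iff {x : V} : labelFreshAt v f x = Fin.last d ↔ x = v := by
  by_cases hx : x = v
  · simp [labelFreshAt, hx]
  · simp [labelFreshAt_of_ne hx, hx, (Fin.castSucc_lt_last _).ne]

theorem SimpleGraph.IsDistinguishingLabeling.labelFreshAt {G : SimpleGraph V}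
    (hf : (G.vContract v).IsDistinguishingLabeling f) :
    G.IsDistinguishingLabeling (_root_.labelFreshAt v f) := by
  intro φ hφ
  have hv : φ v = v :=
    labelFreshAt_eq_last_iff.mp ((hφ v).trans (labelFreshAt_eq_last_iff.mpr rfl))
  have hψ : ∀ x, φ.vContract hv x = x := by
    refine hf _ fun x => Fin.castSucc_injective _ ?_
    rw [← labelFreshAt_of_ne, ← labelFreshAt_of_ne]
    exact hφ x
  intro x
  by_cases hx : x = v
  · rw [hx, hv]
  · exact congrArg Subtype.val (hψ ⟨x, hx⟩)

end labelFreshAt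

theorem distNum_le_distNum_vContract_add_one {V : Type*} [Finite V] (G : SimpleGraph V) (v : V) :
    distNum G ≤ distNum (G.vContract v) + 1 := by
  classical
  obtain ⟨f, hf⟩ := (G.vContract v).exists_isDistinguishingLabeling_distNum
  exact distNum_le hf.labelFreshAt

theorem stmt14_general {V : Type*} [Fintype V] (G : SimpleGraph V) (v : V) :
    distNum G - 1 ≤ distNum (G.vContract v) := by
  have := distNum_le_distNum_vContract_add_one G v
  omega

theorem stmt14 {V : Type*} [Fintype V] (G : SimpleGraph V) (hc : G.Connected)
    (hn : 2 ≤ Fintype.card V) (v : V) :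
    distNum G - 1 ≤ distNum (G.vContract v) :=
  stmt14_general G v
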